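/- Let f : 𝔹^X → 𝔹 be a Boolean function implemented by a DNF formula φ = ⋁_i C_i, and let A_φ be the reaction system with reactions (pos(C_i), neg(C_i) ∪ {ι_f}, {f}) for each conjunction C_i. For any truth assignment s : X → 𝔹 with corresponding set W_s = {x ∈ X | s(x) = 1}, one has res_{A_φ}(W_s) = {f} if and only if f(s) = 1, and res_{A_φ}(W_s) = ∅ if and only if f(s) = 0. -/

import Mathlib

/-!
Every reaction of `A_φ` has product set `{f}`, so `res_{A_φ}(W_s)` is `{f}` when some reaction is
enabled in `W_s` and `∅` otherwise. Since `ι_f ∉ X ⊇ W_s`, the extra inhibitor never blocks, and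
the reaction of `C` is enabled in `W_s` exactly when `s` satisfies `C`; by the DNF property this
happens for some `C` iff `f(s) = 1`.
-/

/-- A reaction over background type `α`: (reactants, inhibitors, products). -/
abbrev Rxn (α : Type) := Finset α × Finset α × Finset α

variable {α : Type} [DecidableEq α]

def enab (r : Rxn α) (T : Finset α) : Prop := r.1 ⊆ T ∧ Disjoint r.2.1 T

instance (r : Rxn α) (T : Finset α) : Decidable (enab r T) := by
  unfold enab; infer_instance

/-- `res_r(T)`. -/
def resr (r : Rxn α) (T : Finset α) : Finset α := if enab r T then r.2.2 else ∅

/-- `res_A(T) = ⋃_{r ∈ A} res_r(T)`. -/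
def resA (A : Finset (Rxn α)) (T : Finset α) : Finset α := A.biUnion (fun r => resr r T)

/-- State sequence of an interactive process starting in `X` with contexts `γ`:
`W₀ = X`, `W_{i+1} = C_{i+1} ∪ res_A(W_i)`. -/
def states (A : Finset (Rxn α)) (X : Finset α) (γ : ℕ → Finset α) : ℕ → Finset α
  | 0 => X
  | n + 1 => γ (n + 1) ∪ resA A (states A X γ n)

theorem mem_resA {A : Finset (Rxn α)} {T : Finset α} {y : α} :
    y ∈ resA A T ↔ ∃ r ∈ A, enab r T ∧ y ∈ r.2.2 := by
  simp only [resA, resr, Finset.mem_biUnion]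
  refine exists_congr fun r => and_congr_right fun _ => ?_
  split_ifs <;> simp [*]

theorem resA_eq_ite_of_forall_products_eq {A : Finset (Rxn α)} {T P : Finset α}
    (hP : ∀ r ∈ A, r.2.2 = P) :
    resA A T = if ∃ r ∈ A, enab r T then P else ∅ := by
  ext y
  rw [mem_resA]
  split_ifs with h
  · obtain ⟨r, hr, hen⟩ := h
    exact ⟨fun ⟨r', hr', _, hy⟩ => hP r' hr' ▸ hy, fun hy => ⟨r, hr, hen, (hP r hr).symm ▸ hy⟩⟩
  · simp only [Finset.notMem_empty, iff_false]
    exact fun ⟨r, hr, hen, _⟩ => h ⟨r, hr, hen⟩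

theorem enab_filter_iff {X pos neg P : Finset α} {ι : α} {s : α → Bool}
    (hpos : pos ⊆ X) (hneg : neg ⊆ X) (hι : ι ∉ X) :
    enab (pos, insert ι neg, P) (X.filter fun x => s x = true) ↔
      (∀ x ∈ pos, s x = true) ∧ ∀ x ∈ neg, s x = false := by
  simp only [enab, Finset.subset_iff, Finset.disjoint_left, Finset.mem_insert, Finset.mem_filter]
  refine and_congr (forall₂_congr fun x hx => and_iff_right (hpos hx)) ?_
  constructor
  · intro h x hx
    simpa [hneg hx] using h (Or.inr hx)
  · rintro h x (rfl | hx) ⟨hxX, hsx⟩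
    · exact hι hxX
    · simp [h x hx] at hsx

theorem stmt5_general (X : Finset α) (f ι : α) (hι : ι ∉ X)
    (φ : Finset (Finset α × Finset α))
    (hφ : ∀ c ∈ φ, c.1 ⊆ X ∧ c.2 ⊆ X ∧ Disjoint c.1 c.2)
    (F : (α → Bool) → Bool)
    (hImpl : ∀ s : α → Bool,
      F s = true ↔ ∃ c ∈ φ, (∀ x ∈ c.1, s x = true) ∧ ∀ x ∈ c.2, s x = false)
    (s : α → Bool) :
    (resA (φ.image fun c => (c.1, insert ι c.2, ({f} : Finset α)))
        (X.filter fun x => s x = true) = {f} ↔ F s = true) ∧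
    (resA (φ.image fun c => (c.1, insert ι c.2, ({f} : Finset α)))
        (X.filter fun x => s x = true) = ∅ ↔ F s = false) := by
  set A := φ.image fun c => (c.1, insert ι c.2, ({f} : Finset α))
  set W := X.filter fun x => s x = true
  have henab : (∃ r ∈ A, enab r W) ↔ F s = true := by
    rw [Finset.exists_mem_image, hImpl s]
    exact exists_congr fun c => and_congr_right fun hc =>
      enab_filter_iff (hφ c hc).1 (hφ c hc).2.1 hι
  have hres : resA A W = if F s then {f} else ∅ := by
    rw [resA_eq_ite_of_forall_products_eq (P := {f}) (Finset.forall_mem_image.2 fun _ _ => rfl)]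
    exact if_congr henab rfl rfl
  rw [hres]
  cases F s <;> simp

/-- the reaction system `A_φ = {(pos(Cᵢ), neg(Cᵢ) ∪ {ι_f}, {f}) | Cᵢ ∈ φ}`
simulates the Boolean function `F` implemented by the DNF `φ`:
`res_{A_φ}(W_s) = {f}` iff `F s = 1`, and `res_{A_φ}(W_s) = ∅` iff `F s = 0`. -/
theorem stmt5 (X : Finset α) (f ι : α) (hf : f ∉ X) (hι : ι ∉ X) (hιf : ι ≠ f)
    (φ : Finset (Finset α × Finset α))
    (hφ : ∀ c ∈ φ, c.1 ⊆ X ∧ c.2 ⊆ X ∧ Disjoint c.1 c.2)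
    (F : (α → Bool) → Bool)
    (hImpl : ∀ s : α → Bool,
      F s = true ↔ ∃ c ∈ φ, (∀ x ∈ c.1, s x = true) ∧ ∀ x ∈ c.2, s x = false)
    (s : α → Bool) :
    (resA (φ.image fun c => (c.1, insert ι c.2, ({f} : Finset α)))
        (X.filter fun x => s x = true) = {f} ↔ F s = true) ∧
    (resA (φ.image fun c => (c.1, insert ι c.2, ({f} : Finset α)))
        (X.filter fun x => s x = true) = ∅ ↔ F s = false) :=
  stmt5_general X f ι hι φ hφ F hImpl s
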